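/- arXiv:1712.07347 — 4 statements merged into one kernel-verified Lean document; each statement's English description precedes it below -/
import Mathlib

section
/- Let V be a finite-dimensional complex vector space of even dimension with a non-degenerate symmetric bilinear form Q, let V_iso ⊆ V be a maximal isotropic subspace, and let V₊ ⊆ V be a real subspace of half the real dimension of V such that Q restricted to V₊ is real-valued and positive definite and V = V₊ ⊕ √-1·V₊ as real vector spaces. Then the composition of the inclusion V_iso ↪ V with the real-linear projection V → V₊ (along √-1·V₊) is an isomorphism of real vector spaces. -/
open Complex

/-- For a finite-dimensional complex vector space `V` of even dimension `2m`
with a non-degenerate symmetric bilinear form `Q`, a maximal isotropic subspace `Viso`,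
and a positive real form `Vplus` (a half-dimensional real subspace on which `Q` is real
and positive definite, with `V = Vplus ⊕ I • Vplus` over `ℝ`), the composition of the
inclusion `Viso ↪ V` with the real-linear projection onto `Vplus` is a bijection. -/
theorem stmt_0
    (V : Type*) [AddCommGroup V] [Module ℂ V] [FiniteDimensional ℂ V]
    (m : ℕ) (hdim : Module.finrank ℂ V = 2 * m)
    (Q : V →ₗ[ℂ] V →ₗ[ℂ] ℂ)
    (hQsymm : ∀ v w : V, Q v w = Q w v)
    (hQnondeg : ∀ v : V, (∀ w : V, Q v w = 0) → v = 0)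
    (Viso : Submodule ℂ V)
    (hiso : ∀ v ∈ Viso, ∀ w ∈ Viso, Q v w = 0)
    (hisodim : Module.finrank ℂ Viso = m)
    (Vplus : Submodule ℝ V)
    (hreal : ∀ v ∈ Vplus, ∀ w ∈ Vplus, (Q v w).im = 0)
    (hpos : ∀ v ∈ Vplus, v ≠ 0 → 0 < (Q v v).re)
    (J : V →ₗ[ℝ] V)
    (hJ : ∀ v : V, J v = (Complex.I : ℂ) • v)
    (hcompl : IsCompl Vplus (Vplus.map J)) :
    Function.Bijective
      (fun v : Viso =>
        Submodule.linearProjOfIsCompl Vplus (Vplus.map J) hcompl (v : V)) := by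
  have hJinj : Function.Injective J := by
    intro a b hab
    rw [hJ, hJ] at hab
    exact smul_right_injective V Complex.I_ne_zero hab
  set f : Viso →ₗ[ℝ] Vplus :=
    (Submodule.linearProjOfIsCompl Vplus (Vplus.map J) hcompl).comp
      ((Viso.subtype).restrictScalars ℝ) with hf
  have hinj : Function.Injective f := by
    rw [← LinearMap.ker_eq_bot, LinearMap.ker_eq_bot']
    intro v hv
    have hv' : (v : V) ∈ Vplus.map J := by
      rw [← Submodule.linearProjOfIsCompl_apply_eq_zero_iff hcompl]
      exact hv
    obtain ⟨p, hp, hpv⟩ := hv'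
    rw [hJ] at hpv
    have hQ0 : Q ((I:ℂ) • p) ((I:ℂ) • p) = 0 := by
      rw [hpv]; exact hiso _ v.2 _ v.2
    have hQpp : Q p p = 0 := by
      simp only [map_smul, LinearMap.smul_apply, smul_eq_mul, ← mul_assoc,
        Complex.I_mul_I] at hQ0
      have : (-1 : ℂ) * Q p p = 0 := hQ0
      linear_combination -this
    have hp0 : p = 0 := by
      by_contra h
      have := hpos p hp h
      rw [hQpp] at this
      simp at this
    have : (v : V) = 0 := by rw [← hpv, hp0, smul_zero]
    exact Subtype.ext this
  have hrank : Module.finrank ℝ Viso = Module.finrank ℝ Vplus := by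
    have h1 : Module.finrank ℝ V = 2 * (2 * m) := by
      rw [← Module.finrank_mul_finrank ℝ ℂ V, Complex.finrank_real_complex, hdim]
    have h2 : Module.finrank ℝ Viso = 2 * m := by
      rw [← Module.finrank_mul_finrank ℝ ℂ Viso, Complex.finrank_real_complex, hisodim]
    have h3 : Module.finrank ℝ (Vplus.map J) = Module.finrank ℝ Vplus :=
      (Submodule.equivMapOfInjective J hJinj Vplus).finrank_eq.symm
    have h4 := Submodule.finrank_add_eq_of_isCompl hcompl
    rw [h3, h1] at h4
    omega
  exact ⟨hinj, (LinearMap.injective_iff_surjective_of_finrank_eq_finrank hrank).mp hinj⟩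
end

section
/- Let π be a solid partition with π_{ijk} = 0 unless i = j = 1 (a 'column' solid partition determined by the weakly decreasing sequence π_{11k}). Then the combinatorial weight satisfies ω^c_π = ∏_{k=1}^{∞} 1/(π_{11k} - π_{11,k+1})!. -/
/-!
If `π = Σ m_ξ ξ` vanishes off the column `i = j = 1`, then so does every `ξ` with `m_ξ ≠ 0`,
i.e. `ξ` is a column `ξ^{(n)}`. For multiplicities carried by columns, passing from level `k` to
level `k + 1` of `Σ m_ξ ξ` removes exactly the columns of height `k`, so
`π_{11k} - π_{11,k+1} = m_{ξ^{(k)}}`. Hence `C_π` has at most one element; conversely these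
differences do lie in `C_π`, because they telescope back to `π_{11k}` (both sides vanish for
large `k`). The weight is then the product of their inverse factorials.
-/

/-- A plane partition, 0-indexed: `val i j` corresponds to `ξ_{i+1,j+1}`. -/
structure PlanePartition where
  val : ℕ → ℕ → ℕ
  dec1 : ∀ i j, val (i + 1) j ≤ val i j
  dec2 : ∀ i j, val i (j + 1) ≤ val i j
  finite : (Function.support fun p : ℕ × ℕ => val p.1 p.2).Finite

/-- The size `|ξ|` of a plane partition. -/
noncomputable def PlanePartition.size (ξ : PlanePartition) : ℕ :=
  ξ.finite.toFinset.sum fun p => ξ.val p.1 p.2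

/-- The binary representation of a plane partition: `ξ(i+1,j+1,k+1) = 1` iff
`k+1 ≤ ξ_{i+1,j+1}`. -/
def PlanePartition.bin (ξ : PlanePartition) (i j k : ℕ) : ℕ :=
  if k < ξ.val i j then 1 else 0

/-- A solid partition, 0-indexed: `val i j k` corresponds to `π_{i+1,j+1,k+1}`. -/
structure SolidPartition where
  val : ℕ → ℕ → ℕ → ℕ
  dec1 : ∀ i j k, val (i + 1) j k ≤ val i j k
  dec2 : ∀ i j k, val i (j + 1) k ≤ val i j k
  dec3 : ∀ i j k, val i j (k + 1) ≤ val i j k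
  finite : (Function.support fun p : ℕ × ℕ × ℕ => val p.1 p.2.1 p.2.2).Finite

/-- The size `|π|` of a solid partition. -/
noncomputable def SolidPartition.size (π : SolidPartition) : ℕ :=
  π.finite.toFinset.sum fun p => π.val p.1 p.2.1 p.2.2

/-- A multiplicity sequence in `C_π`: finitely supported non-negative multiplicities,
indexed by (non-empty) plane partitions, whose weighted sum of binary representations
recovers `π`. -/
def IsMultSeq (π : SolidPartition) (m : PlanePartition → ℕ) : Prop :=
  (Function.support m).Finite ∧ (∀ ξ : PlanePartition, ξ.size = 0 → m ξ = 0) ∧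
    ∀ i j k : ℕ, π.val i j k = ∑ᶠ ξ : PlanePartition, m ξ * ξ.bin i j k

/-- The combinatorial weight `ω^c_π = Σ_{{m_ξ}∈C_π} ∏_ξ 1/(m_ξ)!`. -/
noncomputable def SolidPartition.omegaC (π : SolidPartition) : ℚ :=
  ∑ᶠ m ∈ {m : PlanePartition → ℕ | IsMultSeq π m},
    ∏ᶠ ξ : PlanePartition, (1 : ℚ) / ((m ξ).factorial : ℚ)

open Function Filter

theorem finprod_eq_finprod_comp_of_mulSupport_subset_range {α β M : Type*} [CommMonoid M]
    {e : α → β} (he : Injective e) {F : β → M} (hF : mulSupport F ⊆ Set.range e) :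
    ∏ᶠ b, F b = ∏ᶠ a, F (e a) := by
  rw [← finprod_mem_univ, ← finprod_mem_range he]
  exact finprod_mem_inter_mulSupport_eq' _ _ _ fun b hb => by simp [hF hb]

theorem eq_add_sum_range_of_eq_succ_add {M : Type*} [AddCommMonoid M] {f d : ℕ → M}
    (hf : ∀ k, f k = f (k + 1) + d k) (k n : ℕ) :
    f k = f (k + n) + ∑ i ∈ Finset.range n, d (k + i) := by
  induction n with
  | zero => simp
  | succ n ih => rw [ih, hf (k + n), Finset.sum_range_succ, add_assoc, add_comm (d _)]; rfl

theorem eq_of_eq_succ_add_of_eventually_zero {M : Type*} [AddCommMonoid M] {f g d : ℕ → M}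
    (hf : ∀ k, f k = f (k + 1) + d k) (hg : ∀ k, g k = g (k + 1) + d k)
    (hf₀ : ∀ᶠ k in atTop, f k = 0) (hg₀ : ∀ᶠ k in atTop, g k = 0) : f = g := by
  obtain ⟨N, hN⟩ := (hf₀.and hg₀).exists_forall_of_atTop
  funext k
  rw [eq_add_sum_range_of_eq_succ_add hf k N, eq_add_sum_range_of_eq_succ_add hg k N,
    (hN (k + N) (by omega)).1, (hN (k + N) (by omega)).2]

namespace PlanePartition

theorem val_injective : Injective PlanePartition.val := by
  rintro ⟨⟩ ⟨⟩ h
  cases h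
  rfl

@[simps]
def column (n : ℕ) : PlanePartition where
  val i j := if i = 0 ∧ j = 0 then n else 0
  dec1 i j := by simp
  dec2 i j := by simp
  finite := (Set.finite_singleton (0, 0)).subset fun p hp => by
    by_contra hp'
    exact hp (if_neg fun h => hp' (Prod.ext h.1 h.2))

theorem column_injective : Injective column := fun a b h => by
  simpa using congrFun (congrFun (congrArg val h) 0) 0

theorem column_succ_injective : Injective fun n => column (n + 1) :=
  column_injective.comp (add_left_injective 1)

theorem eq_column_of_val_eq_zero {ξ : PlanePartition}
    (h : ∀ i j, ¬(i = 0 ∧ j = 0) → ξ.val i j = 0) : ξ = column (ξ.val 0 0) := by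
  refine val_injective (funext₂ fun i j => ?_)
  by_cases hij : i = 0 ∧ j = 0
  · obtain ⟨rfl, rfl⟩ := hij
    simp
  · simp [hij, h i j hij]

theorem size_eq_zero_iff (ξ : PlanePartition) : ξ.size = 0 ↔ ∀ i j, ξ.val i j = 0 := by
  simp [size, Finset.sum_eq_zero_iff]

theorem bin_eq_zero_iff {ξ : PlanePartition} {i j k : ℕ} : ξ.bin i j k = 0 ↔ ξ.val i j ≤ k := by
  simp [bin]

theorem bin_eq_bin_succ_add (ξ : PlanePartition) (i j k : ℕ) :
    ξ.bin i j k = ξ.bin i j (k + 1) + if ξ.val i j = k + 1 then 1 else 0 := by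
  unfold bin
  split_ifs <;> omega

theorem bin_column_of_ne {i j : ℕ} (hij : ¬(i = 0 ∧ j = 0)) (n k : ℕ) :
    (column n).bin i j k = 0 :=
  bin_eq_zero_iff.2 (by simp [hij])

end PlanePartition

open PlanePartition

def SupportedOnColumns (m : PlanePartition → ℕ) : Prop :=
  support m ⊆ Set.range fun n => column (n + 1)

theorem eventually_finsum_mul_bin_eq_zero {m : PlanePartition → ℕ} (hm : (support m).Finite)
    (i j : ℕ) : ∀ᶠ k in atTop, ∑ᶠ ξ, m ξ * ξ.bin i j k = 0 := by
  refine eventually_atTop.2 ⟨hm.toFinset.sup fun ξ => ξ.val i j, fun k hk => ?_⟩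
  refine finsum_eq_zero_of_forall_eq_zero fun ξ => ?_
  by_cases hξ : m ξ = 0
  · simp [hξ]
  · have hle : ξ.val i j ≤ hm.toFinset.sup fun ξ => ξ.val i j :=
      Finset.le_sup (f := fun ξ : PlanePartition => ξ.val i j) (hm.mem_toFinset.2 hξ)
    rw [bin_eq_zero_iff.2 (hle.trans hk), mul_zero]

theorem SupportedOnColumns.finsum_mul_bin_eq_zero {m : PlanePartition → ℕ}
    (hm : SupportedOnColumns m) {i j : ℕ} (hij : ¬(i = 0 ∧ j = 0)) (k : ℕ) :
    ∑ᶠ ξ, m ξ * ξ.bin i j k = 0 := by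
  refine finsum_eq_zero_of_forall_eq_zero fun ξ => ?_
  by_cases hξ : m ξ = 0
  · simp [hξ]
  · obtain ⟨n, rfl⟩ := hm hξ
    rw [bin_column_of_ne hij, mul_zero]

theorem SupportedOnColumns.finsum_mul_bin_eq_succ_add {m : PlanePartition → ℕ}
    (hm : SupportedOnColumns m) (hfin : (support m).Finite) (k : ℕ) :
    ∑ᶠ ξ, m ξ * ξ.bin 0 0 k = ∑ᶠ ξ, m ξ * ξ.bin 0 0 (k + 1) + m (column (k + 1)) := by
  classical
  have hterm : ∀ ξ, m ξ * ξ.bin 0 0 k =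
      m ξ * ξ.bin 0 0 (k + 1) + if ξ = column (k + 1) then m ξ else 0 := by
    intro ξ
    rw [bin_eq_bin_succ_add, mul_add]
    by_cases hξ : m ξ = 0
    · simp [hξ]
    · obtain ⟨n, rfl⟩ := hm hξ
      simp [column_injective.eq_iff]
  have hfin₁ : (support fun ξ => m ξ * ξ.bin 0 0 (k + 1)).Finite :=
    hfin.subset (support_mul_subset_left _ _)
  have hfin₂ : (support fun ξ => if ξ = column (k + 1) then m ξ else 0).Finite :=
    (Set.finite_singleton _).subset fun ξ hξ => by_contra fun h => hξ (if_neg h)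
  rw [finsum_congr hterm, finsum_add_distrib hfin₁ hfin₂,
    finsum_eq_single _ (column (k + 1)) fun ξ hξ => if_neg hξ, if_pos rfl]

namespace SolidPartition

variable (π : SolidPartition)

def IsColumn : Prop := ∀ i j k, ¬(i = 0 ∧ j = 0) → π.val i j k = 0

theorem finite_support_val (i j : ℕ) : (support (π.val i j)).Finite :=
  π.finite.preimage (f := fun k => (i, j, k)) fun _ _ _ _ h => by simpa using h

theorem eventually_val_eq_zero (i j : ℕ) : ∀ᶠ k in atTop, π.val i j k = 0 := by
  rw [← Nat.cofinite_eq_atTop, eventually_cofinite]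
  exact π.finite_support_val i j

theorem val_eq_succ_add (i j k : ℕ) :
    π.val i j k = π.val i j (k + 1) + (π.val i j k - π.val i j (k + 1)) := by
  have := π.dec3 i j k
  omega

noncomputable def columnMult : PlanePartition → ℕ :=
  extend (fun n => column (n + 1)) (fun n => π.val 0 0 n - π.val 0 0 (n + 1)) 0

theorem columnMult_column_succ (n : ℕ) :
    π.columnMult (column (n + 1)) = π.val 0 0 n - π.val 0 0 (n + 1) :=
  column_succ_injective.extend_apply _ _ n

theorem supportedOnColumns_columnMult : SupportedOnColumns π.columnMult := by
  intro ξ hξ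
  by_contra h
  exact hξ (extend_apply' _ _ ξ h)

theorem finite_support_columnMult : (support π.columnMult).Finite := by
  refine ((π.finite_support_val 0 0).image fun n => column (n + 1)).subset fun ξ hξ => ?_
  obtain ⟨n, rfl⟩ := π.supportedOnColumns_columnMult hξ
  refine ⟨n, fun hn => hξ ?_, rfl⟩
  rw [columnMult_column_succ, hn, zero_tsub]

variable {π}

theorem IsColumn.supportedOnColumns {m : PlanePartition → ℕ} (hπ : π.IsColumn)
    (hm : IsMultSeq π m) : SupportedOnColumns m := by
  intro ξ hξ
  have hval : ∀ i j, ¬(i = 0 ∧ j = 0) → ξ.val i j = 0 := fun i j hij => by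
    have hle := single_le_finsum (f := fun ζ => m ζ * ζ.bin i j 0) ξ
      (hm.1.subset (support_mul_subset_left _ _)) fun _ => Nat.zero_le _
    rw [← hm.2.2, hπ i j 0 hij, Nat.le_zero, mul_eq_zero] at hle
    exact Nat.le_zero.1 (bin_eq_zero_iff.1 (hle.resolve_left hξ))
  have hpos : ξ.val 0 0 ≠ 0 := fun h => by
    rw [eq_column_of_val_eq_zero hval, h] at hξ
    exact hξ (hm.2.1 _ (by simp [size_eq_zero_iff]))
  refine ⟨ξ.val 0 0 - 1, ?_⟩
  simp only [Nat.sub_add_cancel (Nat.pos_of_ne_zero hpos)]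
  exact (eq_column_of_val_eq_zero hval).symm

theorem IsColumn.isMultSeq_columnMult (hπ : π.IsColumn) : IsMultSeq π π.columnMult := by
  have hcols := π.supportedOnColumns_columnMult
  have hfin := π.finite_support_columnMult
  refine ⟨hfin, fun ξ hξ => by_contra fun h => ?_, fun i j k => ?_⟩
  · obtain ⟨n, rfl⟩ := hcols h
    simpa using (size_eq_zero_iff _).1 hξ 0 0
  by_cases hij : i = 0 ∧ j = 0
  · obtain ⟨rfl, rfl⟩ := hij
    refine congrFun (eq_of_eq_succ_add_of_eventually_zero (π.val_eq_succ_add 0 0)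
      (fun k => ?_) (π.eventually_val_eq_zero 0 0) (eventually_finsum_mul_bin_eq_zero hfin 0 0)) k
    rw [hcols.finsum_mul_bin_eq_succ_add hfin, columnMult_column_succ]
  · rw [hπ i j k hij, hcols.finsum_mul_bin_eq_zero hij]

theorem IsColumn.eq_columnMult_of_isMultSeq {m : PlanePartition → ℕ} (hπ : π.IsColumn)
    (hm : IsMultSeq π m) : m = π.columnMult := by
  have hcols := hπ.supportedOnColumns hm
  funext ξ
  by_cases hξ : ξ ∈ Set.range fun n => column (n + 1)
  · obtain ⟨n, rfl⟩ := hξ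
    have hstep := hcols.finsum_mul_bin_eq_succ_add hm.1 n
    rw [← hm.2.2, ← hm.2.2] at hstep
    rw [columnMult_column_succ]
    dsimp only at hstep ⊢
    omega
  · rw [notMem_support.1 (mt (@hcols ξ) hξ),
      notMem_support.1 (mt (@π.supportedOnColumns_columnMult ξ) hξ)]

end SolidPartition

open SolidPartition

/-- for a "column" solid partition (`π_{ijk} = 0` unless `i = j = 1`),
`ω^c_π = ∏_{k≥1} 1/(π_{11k} - π_{11,k+1})!`. -/
theorem stmt_11 (π : SolidPartition)
    (hcol : ∀ i j k : ℕ, ¬(i = 0 ∧ j = 0) → π.val i j k = 0) :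
    π.omegaC = ∏ᶠ k : ℕ, (1 : ℚ) / ((π.val 0 0 k - π.val 0 0 (k + 1)).factorial : ℚ) := by
  have hπ : π.IsColumn := hcol
  have hC : {m | IsMultSeq π m} = {π.columnMult} := Set.eq_singleton_iff_unique_mem.2
    ⟨hπ.isMultSeq_columnMult, fun _ hm => hπ.eq_columnMult_of_isMultSeq hm⟩
  rw [omegaC, hC, finsum_mem_singleton,
    finprod_eq_finprod_comp_of_mulSupport_subset_range column_succ_injective]
  · simp only [columnMult_column_succ]
  · exact fun ξ hξ => π.supportedOnColumns_columnMult fun h => hξ (by simp [h])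
end

section
/- For every d ≥ 1, the identity log( Σ_{d-partitions π} ω^c_π · t^{π_{1...1}} · q^{|π|} ) = t · Σ_{(d-1)-partitions ξ, |ξ| ≥ 1} q^{|ξ|} holds in Q[[t,q]], where ω^c_π is defined via binary representations of (d-1)-partitions exactly as in the solid partition case. -/
/-- A `d`-dimensional partition, 0-indexed: a finitely supported family of non-negative
integers indexed by `Fin d → ℕ`, weakly decreasing in each coordinate. (A `0`-partition
is a single non-negative integer; `1`-partitions are ordinary partitions; `2`-partitions
are plane partitions; `3`-partitions are solid partitions.) -/
structure DPartition (d : ℕ) where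
  val : (Fin d → ℕ) → ℕ
  dec : ∀ (x : Fin d → ℕ) (i : Fin d), val (Function.update x i (x i + 1)) ≤ val x
  finite : (Function.support val).Finite

/-- The size `|π|` of a `d`-partition. -/
noncomputable def DPartition.size {d : ℕ} (π : DPartition d) : ℕ :=
  π.finite.toFinset.sum π.val

/-- The binary representation of a `d`-partition `ξ`, as a family indexed by
`Fin (d+1) → ℕ`: it is `1` iff the last coordinate is `< ξ` of the first `d`
coordinates. -/
def DPartition.bin {d : ℕ} (ξ : DPartition d) (x : Fin (d + 1) → ℕ) : ℕ :=
  if x (Fin.last d) < ξ.val (fun i => x i.castSucc) then 1 else 0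

/-- A multiplicity sequence in `C_π` for a `(d+1)`-partition `π`: finitely supported
non-negative multiplicities indexed by non-empty `d`-partitions whose weighted sum of
binary representations recovers `π`. -/
def DIsMultSeq {d : ℕ} (π : DPartition (d + 1)) (m : DPartition d → ℕ) : Prop :=
  (Function.support m).Finite ∧ (∀ ξ : DPartition d, ξ.size = 0 → m ξ = 0) ∧
    ∀ x : Fin (d + 1) → ℕ, π.val x = ∑ᶠ ξ : DPartition d, m ξ * ξ.bin x

/-- The combinatorial weight `ω^c_π = Σ_{{m_ξ}∈C_π} ∏_ξ 1/(m_ξ)!`. -/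
noncomputable def DPartition.omegaC {d : ℕ} (π : DPartition (d + 1)) : ℚ :=
  ∑ᶠ m ∈ {m : DPartition d → ℕ | DIsMultSeq π m},
    ∏ᶠ ξ : DPartition d, (1 : ℚ) / ((m ξ).factorial : ℚ)

/-!
A multiplicity sequence `m ∈ C_π` determines `π = ∑ m_ξ • bin ξ`, and conversely every finitely
supported `m` on non-empty `ξ` arises from exactly one `π`; under this correspondence
`π₁…₁ = ∑ m_ξ` and `|π| = ∑ m_ξ |ξ|`. Hence the left-hand side is `∑_m ∏_ξ 1/m_ξ!` over those `m`
with `∑ m_ξ = a` and `∑ m_ξ |ξ| = b`, and by the multinomial theorem this is the `q^b`-coefficient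
of `(∑_ξ q^{|ξ|})^a / a!`. Only `ξ` with `|ξ| ≤ b` contribute, so `S` may be truncated there.
-/

open Function Finset

namespace DPartition

variable {d : ℕ}

theorem val_injective : Injective (val : DPartition d → (Fin d → ℕ) → ℕ) := by
  rintro ⟨f, _, _⟩ ⟨g, _, _⟩ rfl
  rfl

theorem val_update_antitone (π : DPartition d) (x : Fin d → ℕ) (i : Fin d) :
    Antitone fun k => π.val (update x i k) :=
  antitone_nat_of_succ_le fun k => by simpa using π.dec (update x i k) i

theorem val_antitone (π : DPartition d) : Antitone π.val := by
  intro x y hxy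
  suffices ∀ s : Finset (Fin d), π.val (s.piecewise y x) ≤ π.val x by simpa using this univ
  intro s
  induction s using Finset.induction_on with
  | empty => simp
  | insert i s hi ih =>
    calc π.val ((insert i s).piecewise y x)
        = π.val (update (s.piecewise y x) i (y i)) := by rw [piecewise_insert]
      _ ≤ π.val (update (s.piecewise y x) i (x i)) := π.val_update_antitone _ i (hxy i)
      _ = π.val (s.piecewise y x) := by rw [← piecewise_eq_of_notMem s y x hi, update_eq_self]
      _ ≤ π.val x := ih

theorem val_le_size (π : DPartition d) (x : Fin d → ℕ) : π.val x ≤ π.size := by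
  by_cases hx : π.val x = 0
  · simp [hx]
  · exact single_le_sum (fun _ _ => Nat.zero_le _) (π.finite.mem_toFinset.mpr hx)

theorem size_eq_zero_iff (π : DPartition d) : π.size = 0 ↔ π.val 0 = 0 := by
  refine ⟨fun h => Nat.eq_zero_of_le_zero (h ▸ π.val_le_size 0), fun h => ?_⟩
  refine sum_eq_zero fun x _ => Nat.eq_zero_of_le_zero ?_
  exact h ▸ π.val_antitone (zero_le (a := x))

/-- The `x i + 1` points of the `i`-th axis below `x` all carry a positive value. -/
theorem lt_size_of_val_ne_zero (π : DPartition d) {x : Fin d → ℕ} (hx : π.val x ≠ 0)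
    (i : Fin d) : x i < π.size := by
  have hpos : ∀ k ∈ range (x i + 1), 0 < π.val (update (0 : Fin d → ℕ) i k) := fun k hk =>
    Nat.pos_of_ne_zero hx |>.trans_le <| π.val_antitone fun j => by
      rcases eq_or_ne j i with rfl | hj
      · simpa [Nat.lt_succ_iff] using hk
      · simp [hj]
  have hsub : (range (x i + 1)).image (update (0 : Fin d → ℕ) i) ⊆ π.finite.toFinset := by
    simp only [image_subset_iff, Set.Finite.mem_toFinset, mem_support]
    exact fun k hk => (hpos k hk).ne'
  calc x i < ∑ _k ∈ range (x i + 1), 1 := by simp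
    _ ≤ ∑ k ∈ range (x i + 1), π.val (update (0 : Fin d → ℕ) i k) := sum_le_sum hpos
    _ = ∑ y ∈ (range (x i + 1)).image (update (0 : Fin d → ℕ) i), π.val y :=
        (sum_image fun k _ l _ hkl => by simpa using congrFun hkl i).symm
    _ ≤ π.size := sum_le_sum_of_subset hsub

theorem finite_setOf_size_le (d n : ℕ) : {ξ : DPartition d | ξ.size ≤ n}.Finite := by
  refine Set.Finite.of_finite_image (f := fun ξ (x : Fin d → Fin n) => ξ.val (fun i => x i))
    ((Set.Finite.pi (t := fun _ => Set.Iic n) fun _ => Set.finite_Iic n).subset ?_) ?_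
  · rintro _ ⟨ξ, hξ, rfl⟩ x -
    exact (ξ.val_le_size _).trans hξ
  · intro ξ hξ ρ hρ h
    refine val_injective (funext fun x => ?_)
    by_cases hx : ∀ i, x i < n
    · exact congrFun h fun i => ⟨x i, hx i⟩
    · push Not at hx
      obtain ⟨i, hi⟩ := hx
      have hzero : ∀ ζ : DPartition d, ζ.size ≤ n → ζ.val x = 0 := fun ζ hζ => by
        by_contra hne
        exact absurd ((ζ.lt_size_of_val_ne_zero hne i).trans_le hζ) hi.not_gt
      rw [hzero ξ hξ, hzero ρ hρ]

instance : Zero (DPartition d) := ⟨⟨0, fun _ _ => le_rfl, by simp⟩⟩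

instance : Add (DPartition d) :=
  ⟨fun π ρ => ⟨π.val + ρ.val, fun x i => add_le_add (π.dec x i) (ρ.dec x i),
    (π.finite.union ρ.finite).subset (support_add _ _)⟩⟩

instance : SMul ℕ (DPartition d) :=
  ⟨fun n π => ⟨n • π.val, fun x i => Nat.mul_le_mul_left n (π.dec x i),
    π.finite.subset (support_smul_subset_right _ _)⟩⟩

@[simp] theorem val_zero : (0 : DPartition d).val = 0 := rfl

instance : AddCommMonoid (DPartition d) :=
  val_injective.addCommMonoid _ rfl (fun _ _ => rfl) fun _ _ => rfl

def valAddHom : DPartition d →+ (Fin d → ℕ) → ℕ where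
  toFun := val
  map_zero' := rfl
  map_add' _ _ := rfl

theorem size_eq_finsum (π : DPartition d) : π.size = ∑ᶠ x, π.val x :=
  (finsum_eq_sum_of_support_subset _ (by simp)).symm

noncomputable def sizeAddHom : DPartition d →+ ℕ where
  toFun := size
  map_zero' := by simp [size_eq_finsum]
  map_add' π ρ := by
    simp only [size_eq_finsum]
    exact finsum_add_distrib π.finite ρ.finite

theorem val_sum_nsmul {ι : Type*} (s : Finset ι) (m : ι → ℕ) (f : ι → DPartition d)
    (x : Fin d → ℕ) : (∑ i ∈ s, m i • f i).val x = ∑ i ∈ s, m i * (f i).val x := by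
  change valAddHom (∑ i ∈ s, m i • f i) x = _
  rw [map_sum, Finset.sum_apply]
  rfl

theorem size_sum_nsmul {ι : Type*} (s : Finset ι) (m : ι → ℕ) (f : ι → DPartition d) :
    (∑ i ∈ s, m i • f i).size = ∑ i ∈ s, m i * (f i).size := by
  change sizeAddHom (∑ i ∈ s, m i • f i) = _
  simp only [map_sum, map_nsmul, smul_eq_mul]
  rfl

theorem bin_antitone (ξ : DPartition d) : Antitone ξ.bin := by
  intro x y hxy
  have hlast : x (Fin.last d) ≤ y (Fin.last d) := hxy _
  have hinit := ξ.val_antitone fun i => hxy i.castSucc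
  unfold bin
  split_ifs <;> omega

theorem support_bin_subset (ξ : DPartition d) :
    support ξ.bin ⊆ Set.univ.pi fun _ => Set.Iio ξ.size := by
  intro x hx i _
  simp only [bin, mem_support, ne_eq, ite_eq_right_iff, one_ne_zero, imp_false, not_not] at hx
  rw [Set.mem_Iio]
  induction i using Fin.lastCases with
  | last => exact hx.trans_le (ξ.val_le_size _)
  | cast i => exact ξ.lt_size_of_val_ne_zero (Nat.zero_lt_of_lt hx).ne' i

def binary (ξ : DPartition d) : DPartition (d + 1) where
  val := ξ.bin
  dec _ _ := ξ.bin_antitone (le_update_self_iff.mpr (Nat.le_succ _))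
  finite := (Set.Finite.pi fun _ => Set.finite_Iio _).subset ξ.support_bin_subset

theorem binary_val_zero {ξ : DPartition d} (hξ : ξ.size ≠ 0) : ξ.binary.val 0 = 1 :=
  if_pos (Nat.pos_of_ne_zero ((ξ.size_eq_zero_iff).not.mp hξ))

theorem size_binary (ξ : DPartition d) : ξ.binary.size = ξ.size := by
  let e : (Fin d → ℕ) × ℕ ≃ (Fin (d + 1) → ℕ) :=
    (Equiv.prodComm _ _).trans (Fin.snocEquiv fun _ => ℕ)
  have he : ∀ p, ξ.bin (e p) = if p.2 < ξ.val p.1 then 1 else 0 := fun p => by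
    simp [e, bin]
  have hfin : (support (ξ.bin ∘ e)).Finite :=
    ξ.binary.finite.preimage e.injective.injOn
  calc ξ.binary.size = ∑ᶠ x, ξ.bin x := ξ.binary.size_eq_finsum
    _ = ∑ᶠ p, ξ.bin (e p) := (finsum_comp_equiv e).symm
    _ = ∑ᶠ (y) (k), ξ.bin (e (y, k)) := finsum_curry _ hfin
    _ = ∑ᶠ y, ξ.val y := finsum_congr fun y => by
        rw [finsum_eq_sum_of_support_subset (s := range (ξ.val y))]
        · simp +contextual [he, filter_true_of_mem]
        · intro k hk
          simp_all
    _ = ξ.size := ξ.size_eq_finsum.symm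

theorem val_zero_sum_binary {s : Finset (DPartition d)} (hs : ∀ ξ ∈ s, ξ.size ≠ 0)
    (m : DPartition d → ℕ) : (∑ ξ ∈ s, m ξ • ξ.binary).val 0 = ∑ ξ ∈ s, m ξ := by
  rw [val_sum_nsmul]
  exact sum_congr rfl fun ξ hξ => by rw [binary_val_zero (hs ξ hξ), mul_one]

theorem size_sum_binary (s : Finset (DPartition d)) (m : DPartition d → ℕ) :
    (∑ ξ ∈ s, m ξ • ξ.binary).size = ∑ ξ ∈ s, m ξ * ξ.size := by
  simp only [size_sum_nsmul, size_binary]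

noncomputable instance : DecidableEq (DPartition d) := Classical.decEq _

variable (d) in
noncomputable def nonemptyOfSizeLE (b : ℕ) : Finset (DPartition d) :=
  (finite_setOf_size_le d b).toFinset.filter fun ξ => ξ.size ≠ 0

@[simp] theorem mem_nonemptyOfSizeLE {b : ℕ} {ξ : DPartition d} :
    ξ ∈ nonemptyOfSizeLE d b ↔ ξ.size ≠ 0 ∧ ξ.size ≤ b := by
  simp [nonemptyOfSizeLE, and_comm]

end DPartition

open DPartition

theorem dIsMultSeq_iff {d : ℕ} {π : DPartition (d + 1)} {m : DPartition d → ℕ}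
    {s : Finset (DPartition d)} (hs : support m ⊆ s) :
    DIsMultSeq π m ↔ (∀ ξ : DPartition d, ξ.size = 0 → m ξ = 0) ∧
      π = ∑ ξ ∈ s, m ξ • ξ.binary := by
  have hsum : ∀ x, ∑ᶠ ξ : DPartition d, m ξ * ξ.bin x = (∑ ξ ∈ s, m ξ • ξ.binary).val x :=
    fun x => (finsum_eq_sum_of_support_subset _ ((support_mul_subset_left _ _).trans hs)).trans
      (val_sum_nsmul s m binary x).symm
  simp only [DIsMultSeq, s.finite_toSet.subset hs, true_and, hsum, ← funext_iff,
    DPartition.val_injective.eq_iff]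

theorem DIsMultSeq.support_subset {d : ℕ} {π : DPartition (d + 1)} {m : DPartition d → ℕ}
    (h : DIsMultSeq π m) : support m ⊆ nonemptyOfSizeLE d π.size := by
  intro ξ hξ
  have hs : support m ⊆ h.1.toFinset := by simp
  obtain ⟨hempty, hπ⟩ := (dIsMultSeq_iff hs).mp h
  refine mem_nonemptyOfSizeLE.mpr ⟨fun h0 => hξ (hempty ξ h0), ?_⟩
  rw [hπ, size_sum_binary]
  calc ξ.size ≤ m ξ * ξ.size := Nat.le_mul_of_pos_left _ (Nat.pos_of_ne_zero hξ)
    _ ≤ ∑ η ∈ h.1.toFinset, m η * η.size :=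
      single_le_sum (f := fun η => m η * η.size) (fun _ _ => Nat.zero_le _) (by simpa using hξ)

noncomputable def multSeqs (d a b : ℕ) : Finset (DPartition d → ℕ) :=
  {m ∈ (nonemptyOfSizeLE d b).piAntidiag a | ∑ ξ ∈ nonemptyOfSizeLE d b, m ξ * ξ.size = b}

theorem dIsMultSeq_iff_mem_multSeqs {d a b : ℕ} {π : DPartition (d + 1)}
    {m : DPartition d → ℕ} (hπ : π.val 0 = a ∧ π.size = b) :
    DIsMultSeq π m ↔
      m ∈ multSeqs d a b ∧ π = ∑ ξ ∈ nonemptyOfSizeLE d b, m ξ • ξ.binary := by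
  obtain ⟨rfl, rfl⟩ := hπ
  have hP : ∀ ξ ∈ nonemptyOfSizeLE d π.size, ξ.size ≠ 0 := fun ξ hξ =>
    (mem_nonemptyOfSizeLE.mp hξ).1
  constructor
  · intro h
    have hs := h.support_subset
    obtain ⟨-, hπ⟩ := (dIsMultSeq_iff hs).mp h
    refine ⟨mem_filter.mpr ⟨mem_piAntidiag.mpr ⟨?_, fun ξ hξ => hs hξ⟩, ?_⟩, hπ⟩
    · exact (val_zero_sum_binary hP m).symm.trans (congrArg (fun ρ => ρ.val 0) hπ).symm
    · exact (size_sum_binary _ m).symm.trans (congrArg size hπ).symm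
  · rintro ⟨hm, hπ⟩
    have hs : support m ⊆ nonemptyOfSizeLE d π.size := fun ξ hξ =>
      (mem_piAntidiag.mp (mem_filter.mp hm).1).2 ξ hξ
    refine (dIsMultSeq_iff hs).mpr ⟨fun ξ hξ => ?_, hπ⟩
    by_contra hne
    exact hP ξ (hs hne) hξ

theorem finsum_omegaC_eq (d a b : ℕ) :
    ∑ᶠ π ∈ {π : DPartition (d + 1) | π.val 0 = a ∧ π.size = b}, π.omegaC =
      ∑ m ∈ multSeqs d a b, ∏ ξ ∈ nonemptyOfSizeLE d b, (1 : ℚ) / (m ξ).factorial := by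
  set A := {π : DPartition (d + 1) | π.val 0 = a ∧ π.size = b}
  have hA : A.Finite := (finite_setOf_size_le (d + 1) b).subset fun π hπ => hπ.2.le
  have hdisj : A.PairwiseDisjoint fun π => {m | DIsMultSeq π m} :=
    fun π hπ ρ hρ hne => Set.disjoint_left.mpr fun m hm hm' =>
      hne (((dIsMultSeq_iff_mem_multSeqs hπ).mp hm).2.trans
        ((dIsMultSeq_iff_mem_multSeqs hρ).mp hm').2.symm)
  have hsub : ∀ π ∈ A, {m | DIsMultSeq π m} ⊆ multSeqs d a b := fun π hπ m hm =>
    ((dIsMultSeq_iff_mem_multSeqs hπ).mp hm).1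
  have hunion : ⋃ π ∈ A, {m | DIsMultSeq π m} = multSeqs d a b := by
    refine (Set.iUnion₂_subset hsub).antisymm fun m hm => Set.mem_iUnion₂.mpr ?_
    obtain ⟨hm', hb⟩ := mem_filter.mp hm
    have ha := (mem_piAntidiag.mp hm').1
    have hπ : (∑ ξ ∈ nonemptyOfSizeLE d b, m ξ • ξ.binary) ∈ A :=
      ⟨(val_zero_sum_binary (fun ξ hξ => (mem_nonemptyOfSizeLE.mp hξ).1) m).trans ha,
        (size_sum_binary _ m).trans hb⟩
    exact ⟨_, hπ, (dIsMultSeq_iff_mem_multSeqs hπ).mpr ⟨hm, rfl⟩⟩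
  calc ∑ᶠ π ∈ A, π.omegaC
      = ∑ᶠ m ∈ ⋃ π ∈ A, {m | DIsMultSeq π m}, ∏ᶠ ξ, (1 : ℚ) / (m ξ).factorial :=
        (finsum_mem_biUnion hdisj hA fun π hπ => (multSeqs d a b).finite_toSet.subset
          (hsub π hπ)).symm
    _ = ∑ m ∈ multSeqs d a b, ∏ ξ ∈ nonemptyOfSizeLE d b, (1 : ℚ) / (m ξ).factorial := by
      rw [hunion, finsum_mem_coe_finset]
      refine sum_congr rfl fun m hm => finprod_eq_prod_of_mulSupport_subset _ fun ξ hξ => ?_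
      refine (mem_piAntidiag.mp (mem_filter.mp hm).1).2 ξ fun h0 => hξ ?_
      simp [h0]

namespace PowerSeries

theorem coeff_pow_congr {R : Type*} [CommSemiring R] {f g : R⟦X⟧} {b : ℕ}
    (h : ∀ n ≤ b, coeff n f = coeff n g) (a : ℕ) : coeff b (f ^ a) = coeff b (g ^ a) := by
  simp only [coeff_pow]
  refine sum_congr rfl fun l hl => prod_congr rfl fun i hi => h _ ?_
  rw [mem_finsuppAntidiag] at hl
  exact hl.1 ▸ single_le_sum (fun _ _ => Nat.zero_le _) hi

theorem coeff_sum_X_pow_pow {ι R : Type*} [CommSemiring R] [DecidableEq ι] (s : Finset ι)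
    (e : ι → ℕ) (a b : ℕ) :
    coeff b ((∑ i ∈ s, X ^ e i : R⟦X⟧) ^ a) =
      ∑ k ∈ s.piAntidiag a with ∑ i ∈ s, k i * e i = b, (Nat.multinomial s k : R) := by
  rw [sum_pow_eq_sum_piAntidiag, map_sum, sum_filter]
  refine sum_congr rfl fun k _ => ?_
  simp_rw [← pow_mul, prod_pow_eq_pow_sum, mul_comm (e _), ← map_natCast (C (R := R)),
    coeff_C_mul_X_pow, eq_comm]

theorem coeff_inv_factorial_smul_sum_X_pow_pow {ι K : Type*} [Field K] [CharZero K]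
    [DecidableEq ι] (s : Finset ι) (e : ι → ℕ) (a b : ℕ) :
    coeff b (((a.factorial : K)⁻¹) • (∑ i ∈ s, X ^ e i : K⟦X⟧) ^ a) =
      ∑ k ∈ s.piAntidiag a with ∑ i ∈ s, k i * e i = b, ∏ i ∈ s, (1 : K) / (k i).factorial := by
  rw [coeff_smul, coeff_sum_X_pow_pow, smul_eq_mul, mul_sum]
  refine sum_congr rfl fun k hk => ?_
  have hsum : ∑ i ∈ s, k i = a := (mem_piAntidiag.mp (mem_filter.mp hk).1).1
  have hspec := congrArg (Nat.cast : ℕ → K) (Nat.multinomial_spec s k)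
  rw [hsum] at hspec
  push_cast at hspec
  have hne : (Nat.multinomial s k : K) ≠ 0 := Nat.cast_ne_zero.mpr (Nat.multinomial_pos s k).ne'
  rw [← hspec, prod_div_distrib, prod_const_one]
  field_simp

end PowerSeries

open PowerSeries

theorem DPartition.coeff_sum_X_pow_size {d b n : ℕ} (hn : n ≤ b) :
    coeff n (∑ ξ ∈ nonemptyOfSizeLE d b, X ^ ξ.size : ℚ⟦X⟧) =
      if n = 0 then 0 else (Nat.card {ξ : DPartition d // ξ.size = n} : ℚ) := by
  simp only [map_sum, coeff_X_pow, sum_boole]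
  split_ifs with hn0
  · rw [filter_false_of_mem fun ξ hξ h => (mem_nonemptyOfSizeLE.mp hξ).1 (h ▸ hn0),
      card_empty, Nat.cast_zero]
  · rw [← Nat.card_eq_finsetCard]
    refine congrArg _ (Nat.card_congr (Equiv.subtypeEquivRight fun ξ => ?_))
    rw [mem_filter, mem_nonemptyOfSizeLE]
    omega

/-- The logarithmic identity, exponentiated and read off coefficientwise: `exp (t S)` has
`q^b t^a`-coefficient equal to the `q^b`-coefficient of `S^a / a!`. -/
theorem stmt_14 (d : ℕ) (S : PowerSeries ℚ)
    (hS : ∀ n : ℕ, PowerSeries.coeff n S =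
      if n = 0 then 0 else (Nat.card {ξ : DPartition d // ξ.size = n} : ℚ))
    (a b : ℕ) :
    ∑ᶠ π ∈ {π : DPartition (d + 1) | π.val (fun _ => 0) = a ∧ π.size = b}, π.omegaC =
      PowerSeries.coeff b (((a.factorial : ℚ)⁻¹) • S ^ a) := by
  calc _ = ∑ m ∈ multSeqs d a b, ∏ ξ ∈ nonemptyOfSizeLE d b, (1 : ℚ) / (m ξ).factorial :=
        finsum_omegaC_eq d a b
    _ = coeff b (((a.factorial : ℚ)⁻¹) •
          (∑ ξ ∈ nonemptyOfSizeLE d b, X ^ ξ.size) ^ a) :=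
        (coeff_inv_factorial_smul_sum_X_pow_pow _ _ a b).symm
    _ = _ := by
      rw [coeff_smul, coeff_smul, coeff_pow_congr
        (fun n hn => (coeff_sum_X_pow_size hn).trans (hS n).symm)]
end

section
/- Let I ⊆ C[x₁,x₂,x₃,x₄] be an ideal that is homogeneous with respect to the Z³-grading in which deg(x₁) = (1,0,0), deg(x₂) = (0,1,0), deg(x₃) = (0,0,1), deg(x₄) = (-1,-1,-1) (i.e. I is invariant under the Calabi–Yau torus T = {t ∈ (C*)⁴ : t₁t₂t₃t₄ = 1}), and suppose the radical of I equals the maximal ideal (x₁,x₂,x₃,x₄). Then I is a monomial ideal, i.e. I is generated by monomials (equivalently, I is homogeneous for the full Z⁴-grading). -/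
open MvPolynomial

/-- The `T`-homogeneous component of weight `w ∈ ℤ³` of a polynomial in
`ℂ[x₁,x₂,x₃,x₄]`, for the `ℤ³`-grading with `deg x₁ = (1,0,0)`, `deg x₂ = (0,1,0)`,
`deg x₃ = (0,0,1)`, `deg x₄ = (-1,-1,-1)`. -/
noncomputable def Tcomponent (p : MvPolynomial (Fin 4) ℂ) (w : Fin 3 → ℤ) :
    MvPolynomial (Fin 4) ℂ :=
  ∑ e ∈ p.support.filter
      (fun e => (fun i : Fin 3 => (e i.castSucc : ℤ) - (e 3 : ℤ)) = w),
    MvPolynomial.monomial e (MvPolynomial.coeff e p)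

namespace Stmt17Aux

/-- the weight map -/
def wt (e : Fin 4 →₀ ℕ) : Fin 3 → ℤ := fun i : Fin 3 => (e i.castSucc : ℤ) - (e 3 : ℤ)

/-- the exponent (1,1,1,1) -/
noncomputable def u4 : Fin 4 →₀ ℕ := Finsupp.equivFunOnFinite.symm (fun _ => 1)

lemma u4_apply (i : Fin 4) : u4 i = 1 := rfl

lemma exp_eq {e e' : Fin 4 →₀ ℕ} (h : wt e = wt e') (h3 : e 3 ≤ e' 3) :
    e' = e + (e' 3 - e 3) • u4 := by
  have h0 : (e 0 : ℤ) - (e 3 : ℤ) = (e' 0 : ℤ) - (e' 3 : ℤ) := congrFun h 0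
  have h1 : (e 1 : ℤ) - (e 3 : ℤ) = (e' 1 : ℤ) - (e' 3 : ℤ) := congrFun h 1
  have h2 : (e 2 : ℤ) - (e 3 : ℤ) = (e' 2 : ℤ) - (e' 3 : ℤ) := congrFun h 2
  ext i
  fin_cases i <;>
    simp only [Finsupp.add_apply, Finsupp.smul_apply, u4_apply, smul_eq_mul, mul_one,
      Fin.mk_zero, Fin.mk_one, Fin.isValue, show (⟨2, by omega⟩ : Fin 4) = 2 from rfl,
      show (⟨3, by omega⟩ : Fin 4) = 3 from rfl] <;>
    omega

/-- the geometric-series trick -/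
lemma key_mem (I : Ideal (MvPolynomial (Fin 4) ℂ)) {m y g : MvPolynomial (Fin 4) ℂ}
    {c : ℂ} (hc : c ≠ 0) {N : ℕ} (hy : y ^ N ∈ I)
    (hq : C c * m + m * (y * g) ∈ I) : m ∈ I := by
  have key : ∀ j : ℕ,
      C c ^ j * m - (-1 : MvPolynomial (Fin 4) ℂ) ^ j * (m * (y * g) ^ j) ∈ I := by
    intro j
    induction j with
    | zero => simp
    | succ j ih =>
      have hId : C c ^ (j+1) * m
            - (-1 : MvPolynomial (Fin 4) ℂ) ^ (j+1) * (m * (y*g)^(j+1))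
          = C c * (C c ^ j * m - (-1)^j * (m * (y*g)^j))
            + (-1 : MvPolynomial (Fin 4) ℂ)^j * (y*g)^j * (C c * m + m * (y*g)) := by
        ring
      rw [hId]
      exact I.add_mem (I.mul_mem_left _ ih) (I.mul_mem_left _ hq)
  have h1 := key N
  have h2 : (-1 : MvPolynomial (Fin 4) ℂ) ^ N * (m * (y*g)^N) ∈ I := by
    have hId : (-1 : MvPolynomial (Fin 4) ℂ) ^ N * (m * (y*g)^N)
        = ((-1)^N * m * g^N) * y^N := by ring
    rw [hId]; exact I.mul_mem_left _ hy
  have h3 : C c ^ N * m ∈ I := by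
    have := I.add_mem h1 h2
    simpa using this
  have hm : m = C ((c ^ N)⁻¹) * (C c ^ N * m) := by
    rw [← C_pow, ← mul_assoc, ← C_mul, inv_mul_cancel₀ (pow_ne_zero _ hc), C_1, one_mul]
  rw [hm]
  exact I.mul_mem_left _ h3

/-- monomials of a T-homogeneous element of I are in I -/
lemma homog_mem (I : Ideal (MvPolynomial (Fin 4) ℂ)) {N : ℕ}
    (hy : (monomial u4 (1:ℂ)) ^ N ∈ I)
    {q : MvPolynomial (Fin 4) ℂ} (hqI : q ∈ I)
    (hhom : ∀ e ∈ q.support, ∀ e' ∈ q.support, wt e = wt e') :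
    ∀ e ∈ q.support, (monomial e (1:ℂ)) ∈ I := by
  classical
  rcases Finset.eq_empty_or_nonempty q.support with hemp | hne
  · intro e he; rw [hemp] at he; exact absurd he (Finset.notMem_empty e)
  obtain ⟨e₀, he₀, hmin⟩ := Finset.exists_min_image q.support (fun e => e 3) hne
  have hstruct : ∀ e ∈ q.support, e = e₀ + (e 3 - e₀ 3) • u4 :=
    fun e he => exp_eq (hhom e₀ he₀ e he) (hmin e he)
  have hgt : ∀ e ∈ q.support, e ≠ e₀ → e₀ 3 < e 3 := by
    intro e he hne'
    rcases lt_or_eq_of_le (hmin e he) with h | h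
    · exact h
    · exact absurd (by rw [hstruct e he, ← h]; simp) hne'
  -- the structure equation
  set c : ℂ := coeff e₀ q with hc
  set m : MvPolynomial (Fin 4) ℂ := monomial e₀ 1 with hm
  set g : MvPolynomial (Fin 4) ℂ :=
    ∑ e ∈ q.support.erase e₀, monomial ((e 3 - e₀ 3 - 1) • u4) (coeff e q) with hg
  have hq : C c * m + m * (monomial u4 (1:ℂ) * g) = q := by
    rw [hm, hg, C_mul_monomial, mul_one, Finset.mul_sum, Finset.mul_sum]
    have : ∀ e ∈ q.support.erase e₀,
        monomial e₀ (1:ℂ) * (monomial u4 1 * monomial ((e 3 - e₀ 3 - 1) • u4) (coeff e q))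
          = monomial e (coeff e q) := by
      intro e he
      rw [Finset.mem_erase] at he
      rw [monomial_mul, monomial_mul, one_mul, one_mul]
      congr 1
      have h1 : e₀ 3 < e 3 := hgt e he.2 he.1
      have h2 : u4 + (e 3 - e₀ 3 - 1) • u4 = (e 3 - e₀ 3) • u4 := by
        have hk : e 3 - e₀ 3 - 1 + 1 = e 3 - e₀ 3 := by omega
        conv_rhs => rw [← hk, add_nsmul, one_nsmul]
        rw [add_comm]
      rw [← add_assoc, add_assoc, h2, ← hstruct e he.2]
    rw [Finset.sum_congr rfl this, hc]
    exact (Finset.add_sum_erase _ (fun x => monomial x (coeff x q)) he₀).trans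
      q.support_sum_monomial_coeff
  have hmI : m ∈ I := by
    refine key_mem I ?_ hy (by rw [hq]; exact hqI)
    rw [hc]; exact (mem_support_iff.mp he₀)
  intro e he
  have : monomial e (1:ℂ) = m * monomial ((e 3 - e₀ 3) • u4) 1 := by
    rw [hm, monomial_mul, one_mul, ← hstruct e he]
  rw [this]
  exact I.mul_mem_right _ hmI

end Stmt17Aux

open Stmt17Aux in
theorem stmt_17 (I : Ideal (MvPolynomial (Fin 4) ℂ))
    (hT : ∀ p ∈ I, ∀ w : Fin 3 → ℤ, Tcomponent p w ∈ I)
    (hrad : I.radical = Ideal.span ({X 0, X 1, X 2, X 3} : Set (MvPolynomial (Fin 4) ℂ))) :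
    ∃ S : Set (MvPolynomial (Fin 4) ℂ),
      (∀ s ∈ S, ∃ e : Fin 4 →₀ ℕ, s = MvPolynomial.monomial e 1) ∧ I = Ideal.span S := by
  classical
  refine ⟨{s | (∃ e : Fin 4 →₀ ℕ, s = MvPolynomial.monomial e 1) ∧ s ∈ I},
    fun s hs => hs.1, ?_⟩
  -- a power of x₁x₂x₃x₄ is in I
  have hX0 : (X 0 : MvPolynomial (Fin 4) ℂ) ∈ I.radical := by
    rw [hrad]; exact Ideal.subset_span (by simp)
  obtain ⟨N, hN⟩ := hX0
  have hu : u4 = Finsupp.single 0 1 + (Finsupp.single 1 1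
      + (Finsupp.single 2 1 + Finsupp.single 3 1)) := by
    ext i
    fin_cases i <;> simp [u4_apply, Finsupp.single_apply]
  have hy : (monomial u4 (1:ℂ)) ^ N ∈ I := by
    have hprod : (monomial u4 (1:ℂ)) = X 0 * (X 1 * (X 2 * X 3)) := by
      simp only [X, monomial_mul, one_mul, hu]
    rw [hprod, mul_pow]
    exact I.mul_mem_right _ hN
  apply le_antisymm
  · intro p hp
    have hdecomp : p = ∑ w ∈ p.support.image wt, Tcomponent p w := by
      rw [eq_comm]
      calc ∑ w ∈ p.support.image wt, Tcomponent p w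
          = ∑ w ∈ p.support.image wt, ∑ e ∈ p.support.filter (fun e => wt e = w),
              monomial e (coeff e p) := rfl
        _ = ∑ e ∈ p.support, monomial e (coeff e p) :=
            Finset.sum_fiberwise_of_maps_to (fun e he => Finset.mem_image_of_mem _ he) _
        _ = p := p.support_sum_monomial_coeff
    rw [hdecomp]
    refine Ideal.sum_mem _ fun w _ => ?_
    have hTmem := hT p hp w
    have hhom : ∀ e ∈ (Tcomponent p w).support, wt e = w := by
      intro e he
      rw [mem_support_iff] at he
      by_contra hnew
      apply he
      unfold Tcomponent
      rw [coeff_sum]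
      apply Finset.sum_eq_zero
      intro e' he'
      rw [coeff_monomial, if_neg]
      intro h
      apply hnew
      rw [← h]
      exact (Finset.mem_filter.mp he').2
    have hmon := homog_mem I hy hTmem
      (fun e he e' he' => (hhom e he).trans (hhom e' he').symm)
    rw [(Tcomponent p w).as_sum]
    refine Ideal.sum_mem _ fun e he => ?_
    have : monomial e (coeff e (Tcomponent p w))
        = C (coeff e (Tcomponent p w)) * monomial e 1 := by
      rw [C_mul_monomial, mul_one]
    rw [this]
    exact Ideal.mul_mem_left _ _ (Ideal.subset_span ⟨⟨e, rfl⟩, hmon e he⟩)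
  · rw [Ideal.span_le]
    exact fun s hs => hs.2
end
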